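/- arXiv:2508.10744 — 4 statements merged into one kernel-verified Lean document; each statement's English description precedes it below -/
import Mathlib

section
/- Let m > 0 and let w : ℝ × ℝ³ × ℝ³ → ℝ be differentiable and rotation invariant in its last two arguments: w(r, Qν₁, Qν₂) = w(r, ν₁, ν₂) for every Q ∈ SO(3), r ∈ ℝ, ν₁, ν₂ ∈ ℝ³. Define W(y₁, y₂, ν₁, ν₂) = w(‖y₁ − y₂‖², ν₁, ν₂). Suppose x₁, x₂, ν₁, ν₂ : ℝ → ℝ³ are twice differentiable and satisfy m xᵢ''(t) = −∇_{yᵢ}W and νᵢ''(t) = −∇_{νᵢ}W evaluated along the trajectory, for i = 1, 2 and all t. Then the total angular momentum t ↦ x₁(t) × (m x₁'(t)) + x₂(t) × (m x₂'(t)) + ν₁(t) × ν₁'(t) + ν₂(t) × ν₂'(t) is constant. -/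
open Matrix

/-- The cross product on `EuclideanSpace ℝ (Fin 3)`. -/
noncomputable def ecross (a b : EuclideanSpace ℝ (Fin 3)) : EuclideanSpace ℝ (Fin 3) :=
  WithLp.toLp 2 (crossProduct (a : Fin 3 → ℝ) (b : Fin 3 → ℝ))

/-!
Along a solution, the equations of motion turn the derivative of the angular momentum into minus
the total torque `Σᵢ yᵢ × ∇_{yᵢ} W + νᵢ × ∇_{νᵢ} W`. The two positional torques cancel because a
potential depending only on `‖y₁ - y₂‖²` exerts central forces, parallel to `y₁ - y₂` and opposite
to each other. The two orientational torques cancel by frame indifference: differentiating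
`θ ↦ w r (exp (θ K) ν₁) (exp (θ K) ν₂)` at `θ = 0`, for the skew-symmetric matrix `K` of
`v ↦ e × v`, shows that `e` is orthogonal to `ν₁ × ∇_{ν₁} w + ν₂ × ∇_{ν₂} w` for every `e`.
-/

open NormedSpace RealInnerProductSpace

section RotationGenerator

variable {ι : Type*} [Fintype ι] [DecidableEq ι]

theorem Matrix.exp_smul_mem_specialOrthogonalGroup {K : Matrix ι ι ℝ} (hK : Kᵀ = -K) (θ : ℝ) :
    exp (θ • K) ∈ specialOrthogonalGroup ι ℝ := by
  have horth : (exp (θ • K))ᵀ * exp (θ • K) = 1 := by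
    rw [← exp_transpose, transpose_smul, hK, ← exp_add_of_commute _ _
      (((Commute.refl K).neg_left).smul_left θ |>.smul_right θ), smul_neg, neg_add_cancel,
      exp_zero]
  have hdet_sq : (exp (θ • K)).det ^ 2 = 1 := by
    simpa [sq] using congrArg det horth
  -- `exp (θ • K)` is a square, which excludes the determinant `-1`.
  have hdet_nonneg : 0 ≤ (exp (θ • K)).det := by
    rw [show θ • K = (2 : ℕ) • ((θ / 2) • K) by
        rw [← Nat.cast_smul_eq_nsmul ℝ, smul_smul, Nat.cast_ofNat, mul_div_cancel₀ θ two_ne_zero],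
      Matrix.exp_nsmul, det_pow]
    positivity
  exact mem_specialOrthogonalGroup_iff.mpr
    ⟨(mem_orthogonalGroup_iff' ι ℝ).mpr horth, by nlinarith⟩

theorem Matrix.hasDerivAt_toEuclideanLin_exp_smul (K : Matrix ι ι ℝ) (v : EuclideanSpace ℝ ι) :
    HasDerivAt (fun θ : ℝ => toEuclideanLin (exp (θ • K)) v) (toEuclideanLin K v) 0 := by
  open scoped Norms.Operator in
  have hexp := hasDerivAt_exp_smul_const' (𝕂 := ℝ) K 0
  rw [zero_smul, exp_zero, mul_one] at hexp
  let evalAt : Matrix ι ι ℝ →L[ℝ] EuclideanSpace ℝ ι :=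
    LinearMap.toContinuousLinearMap (LinearMap.applyₗ v ∘ₗ toEuclideanLin.toLinearMap)
  exact evalAt.hasFDerivAt.comp_hasDerivAt 0 hexp

theorem HasFDerivAt.apply_skew_eq_zero_of_rotation_invariant
    {f : EuclideanSpace ℝ ι × EuclideanSpace ℝ ι → ℝ}
    {L : EuclideanSpace ℝ ι × EuclideanSpace ℝ ι →L[ℝ] ℝ} {a b : EuclideanSpace ℝ ι}
    (hf : HasFDerivAt f L (a, b))
    (hinv : ∀ Q ∈ specialOrthogonalGroup ι ℝ,
      f (toEuclideanLin Q a, toEuclideanLin Q b) = f (a, b))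
    {K : Matrix ι ι ℝ} (hK : Kᵀ = -K) :
    L (toEuclideanLin K a, toEuclideanLin K b) = 0 := by
  have hcurve := (hasDerivAt_toEuclideanLin_exp_smul K a).prodMk
    (hasDerivAt_toEuclideanLin_exp_smul K b)
  have hcomp := hf.comp_hasDerivAt_of_eq 0 hcurve (by simp)
  have hconst : (fun θ : ℝ => f (toEuclideanLin (NormedSpace.exp (θ • K)) a,
        toEuclideanLin (NormedSpace.exp (θ • K)) b))
      = fun _ => f (a, b) :=
    funext fun θ => hinv _ (exp_smul_mem_specialOrthogonalGroup hK θ)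
  rw [Function.comp_def, hconst] at hcomp
  exact hcomp.unique (hasDerivAt_const 0 (f (a, b)))

end RotationGenerator

theorem gradient_comp_norm_sub_sq {F : Type*} [NormedAddCommGroup F] [InnerProductSpace ℝ F]
    [CompleteSpace F] {φ : ℝ → ℝ} {a b : F} (hφ : DifferentiableAt ℝ φ (‖a - b‖ ^ 2)) :
    gradient (fun y => φ (‖y - b‖ ^ 2)) a = (2 * deriv φ (‖a - b‖ ^ 2)) • (a - b) := by
  refine ext_inner_right ℝ fun v => ?_
  have h : HasFDerivAt (fun y => φ (‖y - b‖ ^ 2)) _ a :=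
    hφ.hasDerivAt.comp_hasFDerivAt a ((hasFDerivAt_id a).sub_const b).norm_sq
  rw [inner_gradient_left, h.fderiv]
  simp only [map_sub, ContinuousLinearMap.comp_id, _root_.smul_apply, _root_.sub_apply,
    coe_innerSL_apply, nsmul_eq_mul, Nat.cast_ofNat, smul_eq_mul, real_inner_smul_left, inner_sub_left, id_eq]
  ring

local notation "ℝ³" => EuclideanSpace ℝ (Fin 3)

noncomputable def ecrossCLM : ℝ³ →L[ℝ] ℝ³ →L[ℝ] ℝ³ :=
  LinearMap.toContinuousLinearMap <| LinearMap.toContinuousLinearMap.toLinearMap ∘ₗ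
    (crossProduct.compl₁₂ (WithLp.linearEquiv 2 ℝ (Fin 3 → ℝ)).toLinearMap
      (WithLp.linearEquiv 2 ℝ (Fin 3 → ℝ)).toLinearMap).compr₂
      (WithLp.linearEquiv 2 ℝ (Fin 3 → ℝ)).symm.toLinearMap

theorem ecrossCLM_apply (a b : ℝ³) : ecrossCLM a b = ecross a b := rfl

theorem ecross_self (a : ℝ³) : ecross a a = 0 := by
  rw [ecross, cross_self]; rfl

theorem ecross_smul_right (a b : ℝ³) (c : ℝ) : ecross a (c • b) = c • ecross a b :=
  map_smul (ecrossCLM a) c b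

theorem ecross_neg_right (a b : ℝ³) : ecross a (-b) = -ecross a b :=
  map_neg (ecrossCLM a) b

theorem ecross_sub_right (a b c : ℝ³) : ecross a (b - c) = ecross a b - ecross a c :=
  map_sub (ecrossCLM a) b c

theorem ecross_add_ecross_swap (a b : ℝ³) : ecross a b + ecross b a = 0 :=
  congrArg (WithLp.toLp 2) (cross_anticomm' _ _)

theorem ecross_smul_sub_add_ecross_smul_sub (k : ℝ) (a b : ℝ³) :
    ecross a (k • (a - b)) + ecross b (k • (b - a)) = 0 := by
  rw [ecross_smul_right, ecross_smul_right, ecross_sub_right, ecross_sub_right, ecross_self,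
    ecross_self, ← smul_add, zero_sub, zero_sub, ← neg_add, ecross_add_ecross_swap, neg_zero,
    smul_zero]

theorem inner_ecross (e a b : ℝ³) : ⟪e, ecross a b⟫ = ⟪b, ecross e a⟫ := by
  simp only [EuclideanSpace.inner_eq_star_dotProduct, ecross, star_trivial]
  rw [dotProduct_comm, triple_product_permutation, triple_product_permutation, dotProduct_comm]

theorem HasDerivAt.ecross {f g : ℝ → ℝ³} {f' g' : ℝ³} {t : ℝ}
    (hf : HasDerivAt f f' t) (hg : HasDerivAt g g' t) :
    HasDerivAt (fun τ => _root_.ecross (f τ) (g τ))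
      (_root_.ecross f' (g t) + _root_.ecross (f t) g') t :=
  (ecrossCLM.hasFDerivAt.comp_hasDerivAt t hf).clm_apply hg

noncomputable def crossMatrix (e : Fin 3 → ℝ) : Matrix (Fin 3) (Fin 3) ℝ :=
  LinearMap.toMatrix' (crossProduct e)

theorem crossMatrix_transpose (e : Fin 3 → ℝ) : (crossMatrix e)ᵀ = -crossMatrix e := by
  ext i j
  fin_cases i <;> fin_cases j <;> simp [crossMatrix, LinearMap.toMatrix'_apply, cross_apply]

theorem toEuclideanLin_crossMatrix (e a : ℝ³) :
    toEuclideanLin (crossMatrix e) a = ecross e a := by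
  simp [crossMatrix, toLpLin_apply, LinearMap.toMatrix'_mulVec, ecross]

theorem ecross_gradient_add_ecross_gradient_eq_zero_of_rotation_invariant
    {f : ℝ³ × ℝ³ → ℝ} {a b : ℝ³} (hf : DifferentiableAt ℝ f (a, b))
    (hinv : ∀ Q ∈ specialOrthogonalGroup (Fin 3) ℝ,
      f (toEuclideanLin Q a, toEuclideanLin Q b) = f (a, b)) :
    ecross a (gradient (fun ν => f (ν, b)) a) + ecross b (gradient (fun ν => f (a, ν)) b) = 0 := by
  set L := fderiv ℝ f (a, b)
  have h₁ : HasFDerivAt (fun ν => f (ν, b)) (L.comp (.inl ℝ ℝ³ ℝ³)) a :=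
    hf.hasFDerivAt.comp a (hasFDerivAt_prodMk_left a b)
  have h₂ : HasFDerivAt (fun ν => f (a, ν)) (L.comp (.inr ℝ ℝ³ ℝ³)) b :=
    hf.hasFDerivAt.comp b (hasFDerivAt_prodMk_right a b)
  refine ext_inner_left ℝ fun e => ?_
  rw [inner_add_right, inner_ecross e a, inner_ecross e b, inner_gradient_left, h₁.fderiv,
    inner_gradient_left, h₂.fderiv, ContinuousLinearMap.comp_apply,
    ContinuousLinearMap.comp_apply, ContinuousLinearMap.inl_apply, ContinuousLinearMap.inr_apply,
    ← map_add, Prod.mk_add_mk, add_zero, zero_add, ← toEuclideanLin_crossMatrix,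
    ← toEuclideanLin_crossMatrix,
    hf.hasFDerivAt.apply_skew_eq_zero_of_rotation_invariant hinv (crossMatrix_transpose _),
    inner_zero_right]

theorem ecross_gradient_add_ecross_gradient_eq_zero_of_radial {φ : ℝ → ℝ} {a b : ℝ³}
    (hφ : DifferentiableAt ℝ φ (‖a - b‖ ^ 2)) :
    ecross a (gradient (fun y => φ (‖y - b‖ ^ 2)) a)
      + ecross b (gradient (fun y => φ (‖a - y‖ ^ 2)) b) = 0 := by
  simp_rw [norm_sub_rev a]
  rw [gradient_comp_norm_sub_sq hφ, gradient_comp_norm_sub_sq (by rwa [norm_sub_rev]),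
    norm_sub_rev b a]
  exact ecross_smul_sub_add_ecross_smul_sub _ a b

theorem hasDerivAt_ecross_smul_deriv {f : ℝ → ℝ³} (c : ℝ) (hf : Differentiable ℝ f)
    (hf' : Differentiable ℝ (deriv f)) (t : ℝ) :
    HasDerivAt (fun τ => ecross (f τ) (c • deriv f τ))
      (ecross (f t) (c • deriv (deriv f) t)) t := by
  have h : HasDerivAt (fun τ => ecross (f τ) (c • deriv f τ))
      (ecross (deriv f t) (c • deriv f t) + ecross (f t) (c • deriv (deriv f) t)) t :=
    (hf t).hasDerivAt.ecross ((hf' t).hasDerivAt.const_smul c)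
  rwa [ecross_smul_right, ecross_self, smul_zero, zero_add] at h

theorem hasDerivAt_ecross_deriv {f : ℝ → ℝ³} (hf : Differentiable ℝ f)
    (hf' : Differentiable ℝ (deriv f)) (t : ℝ) :
    HasDerivAt (fun τ => ecross (f τ) (deriv f τ)) (ecross (f t) (deriv (deriv f) t)) t := by
  simpa using hasDerivAt_ecross_smul_deriv 1 hf hf' t

theorem two_body_angular_momentum_conserved_general
    (m : ℝ)
    (w : ℝ → EuclideanSpace ℝ (Fin 3) → EuclideanSpace ℝ (Fin 3) → ℝ)
    (hw : Differentiable ℝ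
      (fun p : ℝ × EuclideanSpace ℝ (Fin 3) × EuclideanSpace ℝ (Fin 3) => w p.1 p.2.1 p.2.2))
    (hinv : ∀ Q : Matrix (Fin 3) (Fin 3) ℝ, Qᵀ * Q = 1 → Q.det = 1 →
      ∀ (r : ℝ) (ν₁ ν₂ : EuclideanSpace ℝ (Fin 3)),
        w r (WithLp.toLp 2 (Q.mulVec ν₁)) (WithLp.toLp 2 (Q.mulVec ν₂)) = w r ν₁ ν₂)
    (x₁ x₂ ν₁ ν₂ : ℝ → EuclideanSpace ℝ (Fin 3))
    (hx₁ : Differentiable ℝ x₁) (hx₁' : Differentiable ℝ (deriv x₁))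
    (hx₂ : Differentiable ℝ x₂) (hx₂' : Differentiable ℝ (deriv x₂))
    (hν₁ : Differentiable ℝ ν₁) (hν₁' : Differentiable ℝ (deriv ν₁))
    (hν₂ : Differentiable ℝ ν₂) (hν₂' : Differentiable ℝ (deriv ν₂))
    (hNx₁ : ∀ t, m • deriv (deriv x₁) t
      = - gradient (fun y : EuclideanSpace ℝ (Fin 3) =>
          w (‖y - x₂ t‖ ^ 2) (ν₁ t) (ν₂ t)) (x₁ t))
    (hNx₂ : ∀ t, m • deriv (deriv x₂) t
      = - gradient (fun y : EuclideanSpace ℝ (Fin 3) =>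
          w (‖x₁ t - y‖ ^ 2) (ν₁ t) (ν₂ t)) (x₂ t))
    (hNν₁ : ∀ t, deriv (deriv ν₁) t
      = - gradient (fun ν : EuclideanSpace ℝ (Fin 3) =>
          w (‖x₁ t - x₂ t‖ ^ 2) ν (ν₂ t)) (ν₁ t))
    (hNν₂ : ∀ t, deriv (deriv ν₂) t
      = - gradient (fun ν : EuclideanSpace ℝ (Fin 3) =>
          w (‖x₁ t - x₂ t‖ ^ 2) (ν₁ t) ν) (ν₂ t)) :
    ∀ s t : ℝ,
      ecross (x₁ s) (m • deriv x₁ s) + ecross (x₂ s) (m • deriv x₂ s)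
        + ecross (ν₁ s) (deriv ν₁ s) + ecross (ν₂ s) (deriv ν₂ s)
      = ecross (x₁ t) (m • deriv x₁ t) + ecross (x₂ t) (m • deriv x₂ t)
        + ecross (ν₁ t) (deriv ν₁ t) + ecross (ν₂ t) (deriv ν₂ t) := by
  have hw_r : ∀ c d, Differentiable ℝ (fun r => w r c d) := fun c d =>
    hw.comp (differentiable_id.prodMk (differentiable_const (c, d)))
  have hw_ν : ∀ r, Differentiable ℝ (fun p : ℝ³ × ℝ³ => w r p.1 p.2) := fun r =>
    hw.comp ((differentiable_const r).prodMk differentiable_id)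
  have hpos : ∀ t, ecross (x₁ t) (gradient (fun y => w (‖y - x₂ t‖ ^ 2) (ν₁ t) (ν₂ t)) (x₁ t))
      + ecross (x₂ t) (gradient (fun y => w (‖x₁ t - y‖ ^ 2) (ν₁ t) (ν₂ t)) (x₂ t)) = 0 :=
    fun t => ecross_gradient_add_ecross_gradient_eq_zero_of_radial
      (φ := fun r => w r (ν₁ t) (ν₂ t)) (hw_r (ν₁ t) (ν₂ t) _)
  have horient : ∀ t,
      ecross (ν₁ t) (gradient (fun ν => w (‖x₁ t - x₂ t‖ ^ 2) ν (ν₂ t)) (ν₁ t))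
        + ecross (ν₂ t) (gradient (fun ν => w (‖x₁ t - x₂ t‖ ^ 2) (ν₁ t) ν) (ν₂ t)) = 0 :=
    fun t => ecross_gradient_add_ecross_gradient_eq_zero_of_rotation_invariant
      (f := fun p => w (‖x₁ t - x₂ t‖ ^ 2) p.1 p.2) (hw_ν _ _)
      (fun Q hQ => hinv Q ((mem_orthogonalGroup_iff' _ _).mp hQ.1) hQ.2 _ _ _)
  have hderiv : ∀ t, HasDerivAt (fun τ =>
      ecross (x₁ τ) (m • deriv x₁ τ) + ecross (x₂ τ) (m • deriv x₂ τ)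
        + ecross (ν₁ τ) (deriv ν₁ τ) + ecross (ν₂ τ) (deriv ν₂ τ)) 0 t := fun t => by
    refine ((((hasDerivAt_ecross_smul_deriv m hx₁ hx₁' t).add
      (hasDerivAt_ecross_smul_deriv m hx₂ hx₂' t)).add (hasDerivAt_ecross_deriv hν₁ hν₁' t)).add
      (hasDerivAt_ecross_deriv hν₂ hν₂' t)).congr_deriv ?_
    rw [hNx₁, hNx₂, hNν₁, hNν₂, ecross_neg_right, ecross_neg_right, ecross_neg_right,
      ecross_neg_right, ← neg_add, ← neg_add, ← neg_add, add_assoc, hpos, horient, add_zero,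
      neg_zero]
  exact fun s t => is_const_of_deriv_eq_zero (fun τ => (hderiv τ).differentiableAt)
    (fun τ => (hderiv τ).deriv) s t

/-- Conservation of the total (generalized) angular momentum
`x₁ × (m x₁') + x₂ × (m x₂') + ν₁ × ν₁' + ν₂ × ν₂'` for two three-dimensional
calamitic molecules interacting via a frame-indifferent potential
`W(y₁,y₂,ν₁,ν₂) = w(‖y₁ - y₂‖², ν₁, ν₂)`. -/
theorem two_body_angular_momentum_conserved
    (m : ℝ) (hm : 0 < m)
    (w : ℝ → EuclideanSpace ℝ (Fin 3) → EuclideanSpace ℝ (Fin 3) → ℝ)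
    (hw : Differentiable ℝ
      (fun p : ℝ × EuclideanSpace ℝ (Fin 3) × EuclideanSpace ℝ (Fin 3) => w p.1 p.2.1 p.2.2))
    (hinv : ∀ Q : Matrix (Fin 3) (Fin 3) ℝ, Qᵀ * Q = 1 → Q.det = 1 →
      ∀ (r : ℝ) (ν₁ ν₂ : EuclideanSpace ℝ (Fin 3)),
        w r (WithLp.toLp 2 (Q.mulVec ν₁)) (WithLp.toLp 2 (Q.mulVec ν₂)) = w r ν₁ ν₂)
    (x₁ x₂ ν₁ ν₂ : ℝ → EuclideanSpace ℝ (Fin 3))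
    (hx₁ : Differentiable ℝ x₁) (hx₁' : Differentiable ℝ (deriv x₁))
    (hx₂ : Differentiable ℝ x₂) (hx₂' : Differentiable ℝ (deriv x₂))
    (hν₁ : Differentiable ℝ ν₁) (hν₁' : Differentiable ℝ (deriv ν₁))
    (hν₂ : Differentiable ℝ ν₂) (hν₂' : Differentiable ℝ (deriv ν₂))
    (hNx₁ : ∀ t, m • deriv (deriv x₁) t
      = - gradient (fun y : EuclideanSpace ℝ (Fin 3) =>
          w (‖y - x₂ t‖ ^ 2) (ν₁ t) (ν₂ t)) (x₁ t))
    (hNx₂ : ∀ t, m • deriv (deriv x₂) t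
      = - gradient (fun y : EuclideanSpace ℝ (Fin 3) =>
          w (‖x₁ t - y‖ ^ 2) (ν₁ t) (ν₂ t)) (x₂ t))
    (hNν₁ : ∀ t, deriv (deriv ν₁) t
      = - gradient (fun ν : EuclideanSpace ℝ (Fin 3) =>
          w (‖x₁ t - x₂ t‖ ^ 2) ν (ν₂ t)) (ν₁ t))
    (hNν₂ : ∀ t, deriv (deriv ν₂) t
      = - gradient (fun ν : EuclideanSpace ℝ (Fin 3) =>
          w (‖x₁ t - x₂ t‖ ^ 2) (ν₁ t) ν) (ν₂ t)) :
    ∀ s t : ℝ,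
      ecross (x₁ s) (m • deriv x₁ s) + ecross (x₂ s) (m • deriv x₂ s)
        + ecross (ν₁ s) (deriv ν₁ s) + ecross (ν₂ s) (deriv ν₂ s)
      = ecross (x₁ t) (m • deriv x₁ t) + ecross (x₂ t) (m • deriv x₂ t)
        + ecross (ν₁ t) (deriv ν₁ t) + ecross (ν₂ t) (deriv ν₂ t) :=
  two_body_angular_momentum_conserved_general m w hw hinv x₁ x₂ ν₁ ν₂ hx₁ hx₁' hx₂ hx₂' hν₁ hν₁' hν₂
    hν₂' hNx₁ hNx₂ hNν₁ hNν₂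
end

section
/- Let (X, μ) be a σ-finite measure space and let K : X × X → [0, ∞) be measurable satisfying the reciprocity condition: for μ-almost every x ∈ X, ∫ K(x, y) dμ(y) = ∫ K(y, x) dμ(y) < ∞. Let F : X → (0, ∞) be measurable and assume that the functions (x, y) ↦ K(x, y) F(x), (x, y) ↦ K(x, y) F(y), and (x, y) ↦ K(x, y) F(x) |log(F(y)/F(x))| are integrable on X × X with respect to μ ⊗ μ. Then ∫∫ K(x, y) F(x) log(F(y)/F(x)) dμ(x) dμ(y) ≤ 0. -/
open MeasureTheory

/-!
Since `log t ≤ t - 1`, the integrand `K(x,y) F(x) log (F(y)/F(x))` is bounded pointwise by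
`K(x,y) F(y) - K(x,y) F(x)`. Integrating first in `y` and using reciprocity, the two terms of
this bound have the same integral, so the integral of the bound vanishes.
-/

theorem Real.mul_log_div_le_sub {a b : ℝ} (ha : 0 < a) (hb : 0 < b) :
    a * Real.log (b / a) ≤ b - a :=
  calc a * Real.log (b / a) ≤ a * (b / a - 1) :=
        mul_le_mul_of_nonneg_left (Real.log_le_sub_one_of_pos (div_pos hb ha)) ha.le
    _ = b - a := by field_simp

theorem integral_prod_mul_fst_eq_mul_snd {X : Type*} [MeasurableSpace X] {μ : Measure X}
    [SigmaFinite μ] {K : X → X → ℝ} {g : X → ℝ}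
    (hrec : ∀ᵐ x ∂μ, ∫ y, K x y ∂μ = ∫ y, K y x ∂μ)
    (h₁ : Integrable (fun p : X × X => K p.1 p.2 * g p.1) (μ.prod μ))
    (h₂ : Integrable (fun p : X × X => K p.1 p.2 * g p.2) (μ.prod μ)) :
    ∫ p, K p.1 p.2 * g p.1 ∂(μ.prod μ) = ∫ p, K p.1 p.2 * g p.2 ∂(μ.prod μ) := by
  rw [integral_prod _ h₁, integral_prod_symm _ h₂]
  refine integral_congr_ae ?_
  filter_upwards [hrec] with x hx
  rw [integral_mul_const, integral_mul_const, hx]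

theorem boltzmann_inequality_general
    {X : Type*} [MeasurableSpace X] (μ : Measure X) [SigmaFinite μ]
    (K : X → X → ℝ)
    (hKnn : ∀ x y, 0 ≤ K x y)
    (hrec : ∀ᵐ x ∂μ, Integrable (fun y => K x y) μ ∧ Integrable (fun y => K y x) μ ∧
      ∫ y, K x y ∂μ = ∫ y, K y x ∂μ)
    (F : X → ℝ) (hFpos : ∀ x, 0 < F x) (hFmeas : Measurable F)
    (hint₁ : Integrable (fun p : X × X => K p.1 p.2 * F p.1) (μ.prod μ))
    (hint₂ : Integrable (fun p : X × X => K p.1 p.2 * F p.2) (μ.prod μ))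
    (hint₃ : Integrable (fun p : X × X => K p.1 p.2 * F p.1 * |Real.log (F p.2 / F p.1)|)
      (μ.prod μ)) :
    ∫ p : X × X, K p.1 p.2 * F p.1 * Real.log (F p.2 / F p.1) ∂(μ.prod μ) ≤ 0 := by
  have hint : Integrable (fun p : X × X => K p.1 p.2 * F p.1 * Real.log (F p.2 / F p.1))
      (μ.prod μ) := by
    refine hint₃.mono' (hint₁.1.mul (by fun_prop : Measurable _).aestronglyMeasurable)
      (.of_forall fun p => ?_)
    rw [Real.norm_eq_abs, abs_mul, abs_of_nonneg (mul_nonneg (hKnn _ _) (hFpos _).le)]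
  have hbound : ∀ p : X × X, K p.1 p.2 * F p.1 * Real.log (F p.2 / F p.1)
      ≤ K p.1 p.2 * F p.2 - K p.1 p.2 * F p.1 := fun p => by
    rw [mul_assoc, ← mul_sub]
    exact mul_le_mul_of_nonneg_left (Real.mul_log_div_le_sub (hFpos _) (hFpos _)) (hKnn _ _)
  calc _ ≤ ∫ p : X × X, (K p.1 p.2 * F p.2 - K p.1 p.2 * F p.1) ∂(μ.prod μ) :=
        integral_mono hint (hint₂.sub hint₁) hbound
    _ = 0 := by
      rw [integral_sub hint₂ hint₁,
        integral_prod_mul_fst_eq_mul_snd (hrec.mono fun _ hx => hx.2.2) hint₁ hint₂, sub_self]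

/-- The measure-theoretic core of the Boltzmann inequality (H-theorem) for
ordered fluids, under the Cercignani–Lampis reciprocity condition. -/
theorem boltzmann_inequality
    {X : Type*} [MeasurableSpace X] (μ : Measure X) [SigmaFinite μ]
    (K : X → X → ℝ)
    (hKnn : ∀ x y, 0 ≤ K x y)
    (hKmeas : Measurable (fun p : X × X => K p.1 p.2))
    (hrec : ∀ᵐ x ∂μ, Integrable (fun y => K x y) μ ∧ Integrable (fun y => K y x) μ ∧
      ∫ y, K x y ∂μ = ∫ y, K y x ∂μ)
    (F : X → ℝ) (hFpos : ∀ x, 0 < F x) (hFmeas : Measurable F)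
    (hint₁ : Integrable (fun p : X × X => K p.1 p.2 * F p.1) (μ.prod μ))
    (hint₂ : Integrable (fun p : X × X => K p.1 p.2 * F p.2) (μ.prod μ))
    (hint₃ : Integrable (fun p : X × X => K p.1 p.2 * F p.1 * |Real.log (F p.2 / F p.1)|)
      (μ.prod μ)) :
    ∫ p : X × X, K p.1 p.2 * F p.1 * Real.log (F p.2 / F p.1) ∂(μ.prod μ) ≤ 0 :=
  boltzmann_inequality_general μ K hKnn hrec F hFpos hFmeas hint₁ hint₂ hint₃
end

section
/- Let (X, μ) be a σ-finite measure space and let K : X × X → [0, ∞) be measurable satisfying the reciprocity condition: for μ-almost every x ∈ X, ∫ K(x, y) dμ(y) = ∫ K(y, x) dμ(y) < ∞. Let F : X → (0, ∞) be measurable and assume that the functions (x, y) ↦ K(x, y) F(x), (x, y) ↦ K(x, y) F(y), and (x, y) ↦ K(x, y) F(x) |log(F(y)/F(x))| are integrable on X × X with respect to μ ⊗ μ. If ∫∫ K(x, y) F(x) log(F(y)/F(x)) dμ(x) dμ(y) = 0, then the set {(x, y) ∈ X × X : K(x, y) > 0 and F(y) ≠ F(x)} is (μ ⊗ μ)-null.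 -/
/-!
Since `log t ≤ t - 1` with equality only at `t = 1`, the function
`D(x,y) = K(x,y) (F(y) - F(x) - F(x) log(F(y)/F(x)))` is nonnegative and is positive exactly where
`K(x,y) > 0` and `F(y) ≠ F(x)`. Reciprocity gives `∫∫ K(x,y) F(y) = ∫∫ K(x,y) F(x)`, so `∫∫ D` is
minus the entropy production, i.e. zero, and therefore `D = 0` almost everywhere.
-/

open MeasureTheory

namespace Real

theorem mul_log_div_le_sub_s11 {a b : ℝ} (ha : 0 < a) (hb : 0 < b) : a * log (b / a) ≤ b - a :=
  calc a * log (b / a) ≤ a * (b / a - 1) :=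
        mul_le_mul_of_nonneg_left (log_le_sub_one_of_pos (div_pos hb ha)) ha.le
    _ = b - a := by field_simp

theorem mul_log_div_lt_sub {a b : ℝ} (ha : 0 < a) (hb : 0 < b) (hab : b ≠ a) :
    a * log (b / a) < b - a :=
  calc a * log (b / a) < a * (b / a - 1) :=
        mul_lt_mul_of_pos_left
          (log_lt_sub_one_of_pos (div_pos hb ha) fun h => hab ((div_eq_one_iff_eq ha.ne').mp h)) ha
    _ = b - a := by field_simp

end Real

theorem integral_prod_mul_snd_eq_mul_fst_of_reciprocal {X : Type*} [MeasurableSpace X]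
    {μ : Measure X} [SFinite μ] {K : X → X → ℝ} {G : X → ℝ}
    (hrec : ∀ᵐ x ∂μ, ∫ y, K x y ∂μ = ∫ y, K y x ∂μ)
    (h₁ : Integrable (fun p : X × X => K p.1 p.2 * G p.1) (μ.prod μ))
    (h₂ : Integrable (fun p : X × X => K p.1 p.2 * G p.2) (μ.prod μ)) :
    ∫ p, K p.1 p.2 * G p.2 ∂(μ.prod μ) = ∫ p, K p.1 p.2 * G p.1 ∂(μ.prod μ) := by
  calc ∫ p, K p.1 p.2 * G p.2 ∂(μ.prod μ)
      = ∫ p, K p.2 p.1 * G p.1 ∂(μ.prod μ) :=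
        (integral_prod_swap (fun p : X × X => K p.1 p.2 * G p.2)).symm
    _ = ∫ x, ∫ y, K y x * G x ∂μ ∂μ := integral_prod _ h₂.swap
    _ = ∫ x, ∫ y, K x y * G x ∂μ ∂μ := by
        refine integral_congr_ae ?_
        filter_upwards [hrec] with x hx
        rw [integral_mul_const, integral_mul_const, hx]
    _ = ∫ p, K p.1 p.2 * G p.1 ∂(μ.prod μ) := (integral_prod _ h₁).symm

theorem boltzmann_inequality_equality_case_general
    {X : Type*} [MeasurableSpace X] (μ : Measure X) [SigmaFinite μ]
    (K : X → X → ℝ)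
    (hKnn : ∀ x y, 0 ≤ K x y)
    (hrec : ∀ᵐ x ∂μ, Integrable (fun y => K x y) μ ∧ Integrable (fun y => K y x) μ ∧
      ∫ y, K x y ∂μ = ∫ y, K y x ∂μ)
    (F : X → ℝ) (hFpos : ∀ x, 0 < F x) (hFmeas : Measurable F)
    (hint₁ : Integrable (fun p : X × X => K p.1 p.2 * F p.1) (μ.prod μ))
    (hint₂ : Integrable (fun p : X × X => K p.1 p.2 * F p.2) (μ.prod μ))
    (hint₃ : Integrable (fun p : X × X => K p.1 p.2 * F p.1 * |Real.log (F p.2 / F p.1)|)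
      (μ.prod μ))
    (hzero : ∫ p : X × X, K p.1 p.2 * F p.1 * Real.log (F p.2 / F p.1) ∂(μ.prod μ) = 0) :
    (μ.prod μ) {p : X × X | 0 < K p.1 p.2 ∧ F p.2 ≠ F p.1} = 0 := by
  set D : X × X → ℝ := fun p =>
    K p.1 p.2 * (F p.2 - F p.1 - F p.1 * Real.log (F p.2 / F p.1)) with hD
  have hD_nonneg : 0 ≤ D := fun p =>
    mul_nonneg (hKnn _ _) (sub_nonneg.2 (Real.mul_log_div_le_sub_s11 (hFpos _) (hFpos _)))
  have hlog_meas : AEStronglyMeasurable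
      (fun p : X × X => K p.1 p.2 * F p.1 * Real.log (F p.2 / F p.1)) (μ.prod μ) :=
    hint₁.aestronglyMeasurable.mul (Real.measurable_log.comp
      ((hFmeas.comp measurable_snd).div (hFmeas.comp measurable_fst))).aestronglyMeasurable
  have hlog_int : Integrable (fun p : X × X => K p.1 p.2 * F p.1 * Real.log (F p.2 / F p.1))
      (μ.prod μ) := by
    refine (integrable_norm_iff hlog_meas).mp (hint₃.congr (.of_forall fun p => ?_))
    dsimp only
    rw [Real.norm_eq_abs, abs_mul, abs_of_nonneg (mul_nonneg (hKnn _ _) (hFpos _).le)]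
  have hgain_int : Integrable (fun p : X × X => K p.1 p.2 * F p.2 - K p.1 p.2 * F p.1)
      (μ.prod μ) := hint₂.sub hint₁
  have hD_eq : D = fun p => K p.1 p.2 * F p.2 - K p.1 p.2 * F p.1
      - K p.1 p.2 * F p.1 * Real.log (F p.2 / F p.1) := by
    funext p; simp only [hD]; ring
  have hD_int : Integrable D (μ.prod μ) := hD_eq ▸ hgain_int.sub hlog_int
  have hD_zero : ∫ p, D p ∂(μ.prod μ) = 0 := by
    rw [hD_eq, integral_sub hgain_int hlog_int, integral_sub hint₂ hint₁,
      integral_prod_mul_snd_eq_mul_fst_of_reciprocal (hrec.mono fun _ hx => hx.2.2) hint₁ hint₂,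
      hzero, sub_self, sub_zero]
  have hD_ae : D =ᵐ[μ.prod μ] 0 := (integral_eq_zero_iff_of_nonneg hD_nonneg hD_int).mp hD_zero
  refine measure_mono_null (fun p ⟨hK, hne⟩ => ?_) (ae_iff.mp hD_ae)
  exact (mul_pos hK (sub_pos.2 (Real.mul_log_div_lt_sub (hFpos _) (hFpos _) hne))).ne'

/-- Equality case of the Boltzmann inequality (Theorem 3.6): when the entropy
production vanishes, `F` is almost everywhere constant on the support of the
collision kernel `K`. -/
theorem boltzmann_inequality_equality_case
    {X : Type*} [MeasurableSpace X] (μ : Measure X) [SigmaFinite μ]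
    (K : X → X → ℝ)
    (hKnn : ∀ x y, 0 ≤ K x y)
    (hKmeas : Measurable (fun p : X × X => K p.1 p.2))
    (hrec : ∀ᵐ x ∂μ, Integrable (fun y => K x y) μ ∧ Integrable (fun y => K y x) μ ∧
      ∫ y, K x y ∂μ = ∫ y, K y x ∂μ)
    (F : X → ℝ) (hFpos : ∀ x, 0 < F x) (hFmeas : Measurable F)
    (hint₁ : Integrable (fun p : X × X => K p.1 p.2 * F p.1) (μ.prod μ))
    (hint₂ : Integrable (fun p : X × X => K p.1 p.2 * F p.2) (μ.prod μ))
    (hint₃ : Integrable (fun p : X × X => K p.1 p.2 * F p.1 * |Real.log (F p.2 / F p.1)|)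
      (μ.prod μ))
    (hzero : ∫ p : X × X, K p.1 p.2 * F p.1 * Real.log (F p.2 / F p.1) ∂(μ.prod μ) = 0) :
    (μ.prod μ) {p : X × X | 0 < K p.1 p.2 ∧ F p.2 ≠ F p.1} = 0 :=
  boltzmann_inequality_equality_case_general μ K hKnn hrec F hFpos hFmeas hint₁ hint₂ hint₃ hzero
end

section
/- Let m > 0 and let B be a real symmetric positive definite 3×3 matrix. Define the microscopic kinetic energy E(p, ς) = m⁻¹ (p · p) + ς · B⁻¹ ς for p, ς ∈ ℝ³. Suppose φ : ℝ³ × ℝ³ → ℝ is continuous and satisfies φ(p₁, ς₁) + φ(p₂, ς₂) = φ(p₁', ς₁') + φ(p₂', ς₂') for all tuples (p₁, ς₁, p₂, ς₂, p₁', ς₁', p₂', ς₂') with p₁ + p₂ = p₁' + p₂', ς₁ + ς₂ = ς₁' + ς₂', and E(p₁, ς₁) + E(p₂, ς₂) = E(p₁', ς₁') + E(p₂', ς₂'). Then there exist a, δ ∈ ℝ and b, c ∈ ℝ³ such that φ(p, ς) = a + b · p + c · ς + δ E(p, ς) for all p, ς ∈ ℝ³. -/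
/-!
View the kinetic energy as a positive definite quadratic form `Q x = β x x` on phase space.
A collision invariant `ψ` with `ψ 0 = 0` is additive on `β`-orthogonal pairs: collide `(x, y)`
into `(x + y, 0)`. Its even part takes equal values at `x` and `y` whenever `Q x = Q y`, because
`x + y ⊥ x - y`; so it is a function of `Q`, additive on `[0, ∞)`, hence `δ • Q` by continuity.
Its odd part `g` is additive along lines, by the collision `(s • x, t • x) ↦ (c • x + u, c • x - u)`
with `c = (s + t) / 2` and `u ⊥ x` of the right length; splitting `y` into a multiple of `x` and a
vector orthogonal to `x` then makes `g` additive, hence linear by continuity.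
-/

open Matrix
open LinearMap (BilinForm)

theorem apply_eq_mul_of_add_of_nonneg {H : ℝ → ℝ} (hc : ContinuousOn H (Set.Ici 0))
    (hadd : ∀ s t, 0 ≤ s → 0 ≤ t → H (s + t) = H s + H t) {t : ℝ} (ht : 0 ≤ t) :
    H t = t * H 1 := by
  have H0 : H 0 = 0 := by simpa using hadd 0 0 le_rfl le_rfl
  -- `s ↦ H s⁺ - H s⁻` is additive since `(s + t)⁺ + s⁻ + t⁻ = (s + t)⁻ + s⁺ + t⁺`.
  let K : ℝ →+ ℝ := AddMonoidHom.mk' (fun s => H s⁺ - H s⁻) fun s t => by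
    have key : H ((s + t)⁺ + s⁻ + t⁻) = H ((s + t)⁻ + s⁺ + t⁺) := by
      congr 1
      linarith [posPart_sub_negPart s, posPart_sub_negPart t, posPart_sub_negPart (s + t)]
    rw [hadd _ _ (by positivity) (by positivity), hadd _ _ (by positivity) (by positivity),
      hadd _ _ (by positivity) (by positivity), hadd _ _ (by positivity) (by positivity)] at key
    linarith
  have hK : Continuous K :=
    (hc.comp_continuous continuous_posPart posPart_nonneg).sub
      (hc.comp_continuous continuous_negPart negPart_nonneg)
  have hKt : K t = H t := by simp [K, posPart_eq_self.2 ht, negPart_eq_zero.2 ht, H0]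
  have hK1 : K 1 = H 1 := by simp [K, H0]
  rw [← hKt, ← hK1, ← smul_eq_mul, ← map_real_smul K hK, smul_eq_mul, mul_one]

namespace LinearMap.BilinForm

variable {V : Type*} [AddCommGroup V] [Module ℝ V] (β : BilinForm ℝ V)

def collisionInvariants : Submodule ℝ (V → ℝ) where
  carrier := {ψ | ∀ x y x' y', x + y = x' + y' →
    β x x + β y y = β x' x' + β y' y' → ψ x + ψ y = ψ x' + ψ y'}
  add_mem' {ψ χ} hψ hχ x y x' y' hs hq := by
    simp only [Pi.add_apply]; linarith [hψ x y x' y' hs hq, hχ x y x' y' hs hq]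
  zero_mem' _ _ _ _ _ _ := by simp
  smul_mem' c ψ hψ x y x' y' hs hq := by
    simp only [Pi.smul_apply, smul_eq_mul, ← mul_add, hψ x y x' y' hs hq]

def IsOrthogonallyAdditive (f : V → ℝ) : Prop :=
  ∀ x y, β x y = 0 → f (x + y) = f x + f y

variable {β}

theorem const_mem_collisionInvariants (c : ℝ) : (fun _ => c) ∈ β.collisionInvariants :=
  fun _ _ _ _ _ _ => rfl

theorem comp_neg_mem_collisionInvariants {ψ : V → ℝ} (hψ : ψ ∈ β.collisionInvariants) :
    ψ ∘ Neg.neg ∈ β.collisionInvariants := fun x y x' y' hs hq =>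
  hψ (-x) (-y) (-x') (-y') (by rw [← neg_add, hs, neg_add]) (by simpa using hq)

theorem apply_add_add (hβ : β.IsSymm) (x y : V) :
    β (x + y) (x + y) = β x x + 2 * β x y + β y y := by
  simp only [map_add, LinearMap.add_apply, hβ.eq y x]; ring

theorem isOrthogonallyAdditive_of_mem_collisionInvariants (hβ : β.IsSymm) {ψ : V → ℝ}
    (hψ : ψ ∈ β.collisionInvariants) (h0 : ψ 0 = 0) : β.IsOrthogonallyAdditive ψ := by
  intro x y hxy
  have := hψ x y (x + y) 0 (add_zero _).symm (by rw [apply_add_add hβ, hxy]; simp)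
  linarith

theorem exists_ne_zero_apply_eq_zero (β : BilinForm ℝ V) (hV : 1 < Module.rank ℝ V) (x : V) :
    ∃ v ≠ 0, β x v = 0 := by
  by_contra! h
  have hinj : Function.Injective (β x) :=
    (injective_iff_map_eq_zero _).2 fun v hv => by_contra fun hv0 => h v hv0 hv
  have := (β x).lift_rank_le_of_injective hinj
  simp only [Module.rank_self, Cardinal.lift_one, Cardinal.lift_le_one_iff] at this
  exact this.not_gt hV

theorem exists_apply_eq_zero_apply_self_eq (hpos : ∀ x, x ≠ 0 → 0 < β x x)
    (hV : 1 < Module.rank ℝ V) (x : V) {r : ℝ} (hr : 0 ≤ r) :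
    ∃ u, β x u = 0 ∧ β u u = r := by
  obtain ⟨v, hv0, hxv⟩ := exists_ne_zero_apply_eq_zero β hV x
  have hvv := hpos v hv0
  refine ⟨√(r / β v v) • v, by simp [hxv], ?_⟩
  simp only [map_smul, LinearMap.smul_apply, smul_eq_mul, ← mul_assoc,
    Real.mul_self_sqrt (div_nonneg hr hvv.le)]
  field_simp

theorem apply_self_nonneg (hpos : ∀ x, x ≠ 0 → 0 < β x x) (x : V) : 0 ≤ β x x := by
  rcases eq_or_ne x 0 with rfl | hx
  · simp
  · exact (hpos x hx).le

theorem apply_add_sub (hβ : β.IsSymm) (x y : V) : β (x + y) (x - y) = β x x - β y y := by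
  simp only [map_add, map_sub, LinearMap.add_apply, hβ.eq y x]; ring

theorem IsOrthogonallyAdditive.eq_of_apply_self_eq (hβ : β.IsSymm) {f : V → ℝ}
    (hf : β.IsOrthogonallyAdditive f) (heven : Function.Even f) {x y : V} (hxy : β x x = β y y) :
    f x = f y := by
  have key : ∀ x y : V, β x x = β y y → f ((2 : ℝ) • x) = f ((2 : ℝ) • y) := by
    intro x y hxy
    have hperp : β (x + y) (x - y) = 0 := by rw [apply_add_sub hβ, hxy, sub_self]
    have hperp' : β (x + y) (y - x) = 0 := by
      rw [← neg_sub, map_neg, hperp, neg_zero]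
    calc f ((2 : ℝ) • x) = f ((x + y) + (x - y)) := by rw [two_smul]; abel_nf
      _ = f (x + y) + f (y - x) := by rw [hf _ _ hperp, ← neg_sub, heven]
      _ = f ((2 : ℝ) • y) := by rw [← hf _ _ hperp', two_smul]; abel_nf
  simpa [smul_smul] using key ((2 : ℝ)⁻¹ • x) ((2 : ℝ)⁻¹ • y) (by simp [hxy])

theorem IsOrthogonallyAdditive.exists_eq_mul_apply_self [TopologicalSpace V] [ContinuousSMul ℝ V]
    (hβ : β.IsSymm) (hpos : ∀ x, x ≠ 0 → 0 < β x x) (hV : 1 < Module.rank ℝ V) {f : V → ℝ}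
    (hf : β.IsOrthogonallyAdditive f) (heven : Function.Even f) (hc : Continuous f) :
    ∃ δ, ∀ x, f x = δ * β x x := by
  obtain ⟨e, -, he⟩ := exists_apply_eq_zero_apply_self_eq hpos hV 0 zero_le_one
  have hQ : ∀ {t : ℝ}, 0 ≤ t → β (√t • e) (√t • e) = t := fun ht => by
    simp [he, Real.mul_self_sqrt ht]
  have hfe : ∀ x, f x = f (√(β x x) • e) := fun x =>
    hf.eq_of_apply_self_eq hβ heven (hQ (apply_self_nonneg hpos x)).symm
  have hadd : ∀ s t : ℝ, 0 ≤ s → 0 ≤ t → f (√(s + t) • e) = f (√s • e) + f (√t • e) := by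
    intro s t hs ht
    obtain ⟨u, hu, huu⟩ := exists_apply_eq_zero_apply_self_eq hpos hV (√s • e) ht
    have hsum : β (√s • e + u) (√s • e + u) = s + t := by
      rw [apply_add_add hβ, hu, huu, hQ hs]; ring
    rw [← hsum, ← hfe, hf _ _ hu, hfe u, huu]
  refine ⟨f e, fun x => ?_⟩
  rw [hfe, apply_eq_mul_of_add_of_nonneg (H := fun t => f (√t • e)) (by fun_prop) hadd
    (apply_self_nonneg hpos x), Real.sqrt_one, one_smul, mul_comm]

theorem IsOrthogonallyAdditive.map_two_smul (hβ : β.IsSymm) (hpos : ∀ x, x ≠ 0 → 0 < β x x)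
    (hV : 1 < Module.rank ℝ V) {f : V → ℝ} (hf : β.IsOrthogonallyAdditive f) (hodd : Function.Odd f)
    (x : V) : f ((2 : ℝ) • x) = 2 * f x := by
  obtain ⟨y, hxy, hyy⟩ := exists_apply_eq_zero_apply_self_eq hpos hV x (apply_self_nonneg hpos x)
  have hperp : β (x + y) (x - y) = 0 := by rw [apply_add_sub hβ, hyy, sub_self]
  have hsub : f (x - y) = f x - f y := by
    rw [sub_eq_add_neg, hf x (-y) (by simp [hxy]), hodd, sub_eq_add_neg]
  calc f ((2 : ℝ) • x) = f ((x + y) + (x - y)) := by rw [two_smul]; abel_nf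
    _ = 2 * f x := by rw [hf _ _ hperp, hf x y hxy, hsub]; ring

theorem map_add_smul_of_mem_collisionInvariants (hβ : β.IsSymm)
    (hpos : ∀ x, x ≠ 0 → 0 < β x x) (hV : 1 < Module.rank ℝ V) {g : V → ℝ}
    (hg : g ∈ β.collisionInvariants) (hodd : Function.Odd g) (x : V) (s t : ℝ) :
    g ((s + t) • x) = g (s • x) + g (t • x) := by
  have hf := isOrthogonallyAdditive_of_mem_collisionInvariants hβ hg hodd.map_zero
  obtain ⟨u, hxu, huu⟩ := exists_apply_eq_zero_apply_self_eq hpos hV x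
    (mul_nonneg (sq_nonneg ((s - t) / 2)) (apply_self_nonneg hpos x))
  set c := (s + t) / 2
  have hcu : β (c • x) u = 0 := by simp [hxu]
  have hcol := hg (s • x) (t • x) (c • x + u) (c • x + -u)
    (by rw [add_add_add_comm, add_neg_cancel, add_zero, ← add_smul, ← add_smul, add_halves])
    (by
      rw [apply_add_add hβ, apply_add_add hβ]
      simp only [map_smul, LinearMap.smul_apply, smul_eq_mul, hxu, mul_zero, add_zero, huu,
        map_neg, neg_zero, LinearMap.neg_apply, neg_neg, c]
      ring)
  rw [hf _ _ hcu, hf _ _ (by simp [hxu]), hodd u] at hcol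
  have hdouble : (s + t) • x = (2 : ℝ) • (c • x) := by
    rw [smul_smul, mul_div_cancel₀ _ two_ne_zero]
  rw [hdouble, hf.map_two_smul hβ hpos hV hodd, hcol]
  ring

theorem map_add_of_mem_collisionInvariants (hβ : β.IsSymm)
    (hpos : ∀ x, x ≠ 0 → 0 < β x x) (hV : 1 < Module.rank ℝ V) {g : V → ℝ}
    (hg : g ∈ β.collisionInvariants) (hodd : Function.Odd g) (x y : V) :
    g (x + y) = g x + g y := by
  rcases eq_or_ne x 0 with rfl | hx
  · simp [hodd.map_zero]
  have hf := isOrthogonallyAdditive_of_mem_collisionInvariants hβ hg hodd.map_zero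
  set α := β x y / β x x
  have hz : ∀ a : ℝ, β (a • x) (y - α • x) = 0 := fun a => by
    simp [α, (hpos x hx).ne']
  calc g (x + y) = g ((1 + α) • x + (y - α • x)) := by rw [add_smul, one_smul]; abel_nf
    _ = g x + (g (α • x) + g (y - α • x)) := by
      rw [hf _ _ (hz _), map_add_smul_of_mem_collisionInvariants hβ hpos hV hg hodd, one_smul,
        add_assoc]
    _ = g x + g y := by rw [← hf _ _ (hz α), add_sub_cancel]

theorem exists_eq_add_add_mul_apply_self_of_mem_collisionInvariants [TopologicalSpace V]
    [ContinuousSMul ℝ V] (hβ : β.IsSymm) (hpos : ∀ x, x ≠ 0 → 0 < β x x)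
    (hV : 1 < Module.rank ℝ V) {ψ : V → ℝ} (hψ : ψ ∈ β.collisionInvariants)
    (hc : Continuous ψ) : ∃ (a δ : ℝ) (L : V →L[ℝ] ℝ), ∀ x, ψ x = a + L x + δ * β x x := by
  set g : V → ℝ := fun x => (ψ x - ψ (-x)) / 2
  set h : V → ℝ := fun x => (ψ x + ψ (-x)) / 2 - ψ 0
  have hg : g ∈ β.collisionInvariants := by
    convert β.collisionInvariants.smul_mem (1 / 2 : ℝ)
      (β.collisionInvariants.sub_mem hψ (comp_neg_mem_collisionInvariants hψ)) using 1
    ext x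
    simp only [one_div, Pi.smul_apply, Pi.sub_apply, Function.comp_apply, smul_eq_mul, g]
    ring
  have hh : h ∈ β.collisionInvariants := by
    convert β.collisionInvariants.sub_mem (β.collisionInvariants.smul_mem (1 / 2 : ℝ)
      (β.collisionInvariants.add_mem hψ (comp_neg_mem_collisionInvariants hψ)))
      (const_mem_collisionInvariants (ψ 0)) using 1
    ext x
    simp only [one_div, Pi.smul_apply, Pi.sub_apply, Pi.add_apply, Function.comp_apply,
      smul_eq_mul, h]
    ring
  have hneg : Continuous fun x : V => -x := by
    simpa using continuous_const_smul (-1 : ℝ) (T := V)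
  have hodd : Function.Odd g := fun x => by simp only [g, neg_neg]; ring
  have heven : Function.Even h := fun x => by simp only [h, neg_neg]; ring
  let L := (AddMonoidHom.mk' g (map_add_of_mem_collisionInvariants hβ hpos hV hg hodd))
    |>.toRealLinearMap (by simp only [AddMonoidHom.mk'_apply, g]; fun_prop)
  obtain ⟨δ, hδ⟩ := (isOrthogonallyAdditive_of_mem_collisionInvariants hβ hh
    (by simp [h])).exists_eq_mul_apply_self hβ hpos hV heven (by simp only [h]; fun_prop)
  refine ⟨ψ 0, δ, L, fun x => ?_⟩
  rw [← hδ]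
  simp only [AddMonoidHom.coe_toRealLinearMap, AddMonoidHom.mk'_apply, L, g, h]
  ring

end LinearMap.BilinForm

section KineticForm

variable {n : Type*} [Fintype n]

noncomputable def kineticForm (m : ℝ) (A : Matrix n n ℝ) : BilinForm ℝ ((n → ℝ) × (n → ℝ)) :=
  LinearMap.mk₂ ℝ (fun x y => m⁻¹ * (x.1 ⬝ᵥ y.1) + x.2 ⬝ᵥ A *ᵥ y.2)
    (fun _ _ _ => by simp only [Prod.fst_add, Prod.snd_add, add_dotProduct]; ring)
    (fun _ _ _ => by simp only [Prod.smul_fst, Prod.smul_snd, smul_dotProduct, smul_eq_mul]; ring)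
    (fun _ _ _ => by simp only [Prod.fst_add, Prod.snd_add, dotProduct_add, mulVec_add]; ring)
    (fun _ _ _ => by
      simp only [Prod.smul_fst, Prod.smul_snd, dotProduct_smul, mulVec_smul, smul_eq_mul]; ring)

theorem kineticForm_apply (m : ℝ) (A : Matrix n n ℝ) (x y : (n → ℝ) × (n → ℝ)) :
    kineticForm m A x y = m⁻¹ * (x.1 ⬝ᵥ y.1) + x.2 ⬝ᵥ A *ᵥ y.2 :=
  rfl

theorem kineticForm_isSymm (m : ℝ) {A : Matrix n n ℝ} (hA : Aᵀ = A) :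
    (kineticForm m A).IsSymm := by
  refine ⟨fun x y => ?_⟩
  rw [kineticForm_apply, kineticForm_apply, dotProduct_comm x.1, dotProduct_mulVec,
    ← mulVec_transpose, hA, dotProduct_comm (A *ᵥ x.2)]

theorem kineticForm_pos {m : ℝ} (hm : 0 < m) {A : Matrix n n ℝ} (hA : A.PosDef)
    {x : (n → ℝ) × (n → ℝ)} (hx : x ≠ 0) : 0 < kineticForm m A x x := by
  rw [kineticForm_apply]
  rcases eq_or_ne x.1 0 with h1 | h1
  · have h2 : x.2 ≠ 0 := fun h2 => hx (Prod.ext h1 h2)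
    simpa [h1] using hA.dotProduct_mulVec_pos h2
  · have hp : 0 < x.1 ⬝ᵥ x.1 := by simpa using dotProduct_star_self_pos_iff.2 h1
    have hs : 0 ≤ x.2 ⬝ᵥ A *ᵥ x.2 := by simpa using hA.posSemidef.dotProduct_mulVec_nonneg x.2
    positivity

theorem exists_dotProduct_add_dotProduct_eq [DecidableEq n] (L : (n → ℝ) × (n → ℝ) →ₗ[ℝ] ℝ) :
    ∃ b c : n → ℝ, ∀ p ς, L (p, ς) = b ⬝ᵥ p + c ⬝ᵥ ς := by
  refine ⟨(dotProductEquiv ℝ n).symm (L ∘ₗ LinearMap.inl ℝ _ _),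
    (dotProductEquiv ℝ n).symm (L ∘ₗ LinearMap.inr ℝ _ _), fun p ς => ?_⟩
  have hdual (f : Module.Dual ℝ (n → ℝ)) (v : n → ℝ) : (dotProductEquiv ℝ n).symm f ⬝ᵥ v = f v :=
    LinearMap.congr_fun ((dotProductEquiv ℝ n).apply_symm_apply f) v
  rw [hdual, hdual, LinearMap.comp_apply, LinearMap.comp_apply, ← map_add, LinearMap.inl_apply,
    LinearMap.inr_apply, Prod.mk_add_mk, add_zero, zero_add]

end KineticForm

/-- Characterization of continuous collision invariants (Theorem 3.7 / Appendix B):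
any continuous function conserved by every binary collision preserving the total
linear momentum, the total conjugate order-parameter momentum and the total
kinetic energy is an affine combination of these quantities. -/
theorem collision_invariants_characterization
    (m : ℝ) (hm : 0 < m)
    (B : Matrix (Fin 3) (Fin 3) ℝ)
    (hBsym : Bᵀ = B)
    (hBpos : ∀ x : Fin 3 → ℝ, x ≠ 0 → 0 < x ⬝ᵥ B.mulVec x)
    (E : (Fin 3 → ℝ) → (Fin 3 → ℝ) → ℝ)
    (hE : ∀ p ς, E p ς = m⁻¹ * (p ⬝ᵥ p) + ς ⬝ᵥ B⁻¹.mulVec ς)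
    (φ : (Fin 3 → ℝ) × (Fin 3 → ℝ) → ℝ)
    (hφcont : Continuous φ)
    (hφinv : ∀ p₁ ς₁ p₂ ς₂ p₁' ς₁' p₂' ς₂' : Fin 3 → ℝ,
      p₁ + p₂ = p₁' + p₂' → ς₁ + ς₂ = ς₁' + ς₂' →
      E p₁ ς₁ + E p₂ ς₂ = E p₁' ς₁' + E p₂' ς₂' →
      φ (p₁, ς₁) + φ (p₂, ς₂) = φ (p₁', ς₁') + φ (p₂', ς₂')) :
    ∃ (a δ : ℝ) (b c : Fin 3 → ℝ), ∀ p ς : Fin 3 → ℝ,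
      φ (p, ς) = a + b ⬝ᵥ p + c ⬝ᵥ ς + δ * E p ς := by
  have hB : B.PosDef := .of_dotProduct_mulVec_pos (by simpa [Matrix.IsHermitian] using hBsym)
    fun x hx => by simpa using hBpos x hx
  have hβ : (kineticForm m B⁻¹).IsSymm :=
    kineticForm_isSymm m (by rw [transpose_nonsing_inv, hBsym])
  have hφ : φ ∈ (kineticForm m B⁻¹).collisionInvariants := fun x y x' y' hs hq =>
    hφinv x.1 x.2 y.1 y.2 x'.1 x'.2 y'.1 y'.2 (congrArg Prod.fst hs) (congrArg Prod.snd hs)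
      (by rw [hE, hE, hE, hE]; exact hq)
  obtain ⟨a, δ, L, hL⟩ :=
    LinearMap.BilinForm.exists_eq_add_add_mul_apply_self_of_mem_collisionInvariants hβ
      (fun _ => kineticForm_pos hm hB.inv) (by rw [rank_prod', rank_fin_fun]; norm_num) hφ hφcont
  obtain ⟨b, c, hbc⟩ := exists_dotProduct_add_dotProduct_eq L.toLinearMap
  refine ⟨a, δ, b, c, fun p ς => ?_⟩
  rw [hL, hE, kineticForm_apply, show L (p, ς) = b ⬝ᵥ p + c ⬝ᵥ ς from hbc p ς]
  ring
end
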